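/- Let 0 ≤ α < 1 and β > 1. For every word w ∈ L^{α,β}, the follower set F(w) = {x ∈ A^ℕ : wx ∈ X^{α,β}} equals {x ∈ X^{α,β} : σ^{k1(w)}(a) ⪯ x ⪯ σ^{k2(w)}(b)}. -/

import Mathlib

open Filter Topology MeasureTheory ENNReal
open scoped Classical

noncomputable section

namespace AB

/-- The (α,β)-transformation `T(x) = βx + α − ⌊βx + α⌋`. -/
def T (α β : ℝ) (x : ℝ) : ℝ := β * x + α - ⌊β * x + α⌋

/-- `λ = ⌈α+β⌉ − 1`, as a natural number. -/
def lamNat (α β : ℝ) : ℕ := (⌈α + β⌉ - 1).toNat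

/-- The digit of `x ∈ [0,1)`: the index `k` with `x ∈ J_k`, namely `⌊βx + α⌋`. -/
def digit (α β : ℝ) (x : ℝ) : ℕ := (⌊β * x + α⌋).toNat

/-- The (α,β)-expansion of `x`. -/
def iSeq (α β : ℝ) (x : ℝ) : ℕ → ℕ := fun n => digit α β ((T α β)^[n] x)

/-- The one-sided (α,β)-shift: closure (in the product topology) of the set of expansions. -/
def Xab (α β : ℝ) : Set (ℕ → ℕ) :=
  closure {s | ∃ x ∈ Set.Ico (0 : ℝ) 1, s = iSeq α β x}

/-- Word of given length read in a one-sided sequence starting at position `k`. -/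
def wordN (s : ℕ → ℕ) (k len : ℕ) : List ℕ := (List.range len).map fun i => s (k + i)

/-- The language of the (α,β)-shift: finite words appearing in points of `Xab`. -/
def Lang (α β : ℝ) : Set (List ℕ) :=
  {w | ∃ s ∈ Xab α β, ∃ k : ℕ, w = wordN s k w.length}

/-- `a = i_{α,β}(0)`. -/
def aSeq (α β : ℝ) : ℕ → ℕ := iSeq α β 0

/-- The prefix of length `l` of a sequence, as a word. -/
def pre (s : ℕ → ℕ) (l : ℕ) : List ℕ := (List.range l).map s

/-- Lexicographic (non-strict) order on words. -/
def wordLe (u v : List ℕ) : Prop := u = v ∨ List.Lex (· < ·) u v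

/-- Lexicographic (non-strict) order on one-sided sequences. -/
def seqLe (x y : ℕ → ℕ) : Prop :=
  x = y ∨ ∃ n : ℕ, (∀ i < n, x i = y i) ∧ x n < y n

/-- The largest `k ≤ |w|` such that the length-`k` suffix of `w` equals the length-`k`
prefix of `s` (this is `k1` for `s = a` and `k2` for `s = b`). -/
def kk (s : ℕ → ℕ) (w : List ℕ) : ℕ :=
  Nat.findGreatest (fun k => w.drop (w.length - k) = pre s k) w.length

/-- The set of finite prefixes of a sequence (`P^a`, `P^b`). -/
def Pset (s : ℕ → ℕ) : Set (List ℕ) := {u | ∃ l : ℕ, u = pre s l}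

/-- The distinguished suffix `s(w)`. -/
def sWord (a b : ℕ → ℕ) (w : List ℕ) : List ℕ :=
  if kk b w < kk a w then w.drop (w.length - kk a w)
  else if kk a w < kk b w then w.drop (w.length - kk b w)
  else []

/-- The hat operation on `P = P^a ∪ P^b` (for `β > 3`, `α = 1/β`). -/
def hatP (a b : ℕ → ℕ) (lam : ℕ) (u : List ℕ) : List ℕ :=
  if u = [] then []
  else if u ∈ Pset a then u.dropLast ++ [u.getLast?.getD 0 + 1]
  else if 3 ≤ u.getLast?.getD 0 then u.dropLast ++ [u.getLast?.getD 0 - 1]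
  else
    (u.set (u.length - kk a u.dropLast - 2) (u.getD (u.length - kk a u.dropLast - 2) 0 - 1)).set
      (u.length - kk a u.dropLast - 1) (lam - 1)

/-- `ŵ` for `w = v·s(w)`: replace the distinguished suffix by its hat. -/
def hatW (a b : ℕ → ℕ) (lam : ℕ) (w : List ℕ) : List ℕ :=
  w.take (w.length - (sWord a b w).length) ++ hatP a b lam (sWord a b w)

/-- `w̃`: the hat operation applied twice. -/
def tildeW (a b : ℕ → ℕ) (lam : ℕ) (w : List ℕ) : List ℕ :=
  hatW a b lam (hatW a b lam w)

/-- `z(u)` for `u ∈ P^b`. -/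
def zP (a b : ℕ → ℕ) (u : List ℕ) : ℕ :=
  if u = [] then 0
  else sSup ({k : ℕ | (u ++ pre (fun i => a (kk a u + i)) k) ∈ Pset b} ∪ {0})

/-- `z(w)` for a word `w` in the language. -/
def zW (a b : ℕ → ℕ) (w : List ℕ) : ℕ :=
  if kk a w < kk b w then zP a b (w.drop (w.length - kk b w)) else 0

/-- `z̄(n) = max{z(u) : u prefix of b, |u| ≤ n}`. -/
def zbar (a b : ℕ → ℕ) (n : ℕ) : ℕ :=
  (Finset.range (n + 1)).sup fun l => zP a b (pre b l)

/-- The natural extension `Σ^{α,β}`. -/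
def SigmaAB (α β : ℝ) : Set (ℤ → ℕ) :=
  {x | ∀ k : ℤ, (fun n : ℕ => x (k + n)) ∈ Xab α β}

/-- `σ^j` on two-sided sequences. -/
def shiftI {A : Type*} (j : ℤ) (x : ℤ → A) : ℤ → A := fun n => x (n + j)

/-- Word of given length read in a two-sided sequence starting at position `k`. -/
def wordZ (x : ℤ → ℕ) (k : ℤ) (len : ℕ) : List ℕ := (List.range len).map fun i => x (k + i)

/-- The map `g : L^{α,β} → {0,1}`. -/
def gW (a b : ℕ → ℕ) (w : List ℕ) : ℕ :=
  if kk a w = 0 ∧ 0 < kk b w ∧ b (kk b w) ≤ 1 then 0 else 1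

/-- `w^♯`: the word `w` placed at positions `k,…,k+|w|−1`, followed by `g(w)` at
position `k+|w|`, and `1` at all other positions. -/
def wSharp (a b : ℕ → ℕ) (k : ℤ) (w : List ℕ) : ℤ → ℕ :=
  fun j => if k ≤ j ∧ j < k + w.length then w.getD (j - k).toNat 1
           else if j = k + w.length then gW a b w else 1

/-- The finite approximation sets `E^n ⊆ Σ^{α,β}`. -/
def En (α β : ℝ) (b : ℕ → ℕ) (n : ℕ) : Set (ℤ → ℕ) :=
  {x | wordZ x (-(n : ℤ)) (2 * n + 1) ∈ Lang α β ∧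
       x ((n : ℤ) + 1) = gW (aSeq α β) b (wordZ x (-(n : ℤ)) (2 * n + 1)) ∧
       ∀ j : ℤ, j < -(n : ℤ) ∨ (n : ℤ) + 1 < j → x j = 1}

/-- `s(x_k^-) = ε` for the left-infinite word `x_{(-∞,k-1]}`: no nonempty suffix of it is a
prefix of `a` or of `b`. -/
def leftStar (a b : ℕ → ℕ) (x : ℤ → ℕ) (k : ℤ) : Prop :=
  (∀ K : ℕ, 1 ≤ K → ¬ ∀ i : ℕ, i < K → x (k - K + i) = a i) ∧
  (∀ K : ℕ, 1 ≤ K → ¬ ∀ i : ℕ, i < K → x (k - K + i) = b i)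

/-- `E^n_{[k,l]}(v)`. -/
def EnCyl (α β : ℝ) (b : ℕ → ℕ) (n : ℕ) (k l : ℤ) (v : List ℕ) : Set (ℤ → ℕ) :=
  {x ∈ En α β b n | wordZ x k (l - k + 1).toNat = v}

/-- `E^{*,n}_{[k,l]}(v)`. -/
def EnCylStar (α β : ℝ) (b : ℕ → ℕ) (n : ℕ) (k l : ℤ) (v : List ℕ) : Set (ℤ → ℕ) :=
  {x ∈ EnCyl α β b n k l v | leftStar (aSeq α β) b x k}

/-- The Birkhoff sum `∑_{j=−n}^{n} φ(σ^j x)`. -/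
def birkhoff (φ : (ℤ → ℕ) → ℝ) (n : ℕ) (x : ℤ → ℕ) : ℝ :=
  ∑ j ∈ Finset.Icc (-(n : ℤ)) (n : ℤ), φ (shiftI j x)

/-- `Ξ^n_{[k,l]}(v)`. -/
def Xi (α β : ℝ) (b : ℕ → ℕ) (φ : (ℤ → ℕ) → ℝ) (n : ℕ) (k l : ℤ) (v : List ℕ) : ℝ :=
  ∑' x : (EnCyl α β b n k l v), Real.exp (birkhoff φ n x.1)

/-- `Ξ^{*,n}_{[k,l]}(v)`. -/
def XiStar (α β : ℝ) (b : ℕ → ℕ) (φ : (ℤ → ℕ) → ℝ) (n : ℕ) (k l : ℤ) (v : List ℕ) : ℝ :=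
  ∑' x : (EnCylStar α β b n k l v), Real.exp (birkhoff φ n x.1)

/-- `δ_i(f)`, as an extended nonnegative real. -/
def oscE {A : Type*} (f : (ℤ → A) → ℝ) (i : ℤ) : ℝ≥0∞ :=
  ⨆ (x : ℤ → A) (y : ℤ → A) (_ : ∀ k : ℤ, k ≠ i → x k = y k), ENNReal.ofReal |f x - f y|

/-- `‖f‖_δ` for a function on the full shift. -/
def enormFull {A : Type*} (f : (ℤ → A) → ℝ) : ℝ≥0∞ := ∑' i : ℤ, oscE f i

/-- `‖f‖_δ` for a function on a subshift `X`: infimum over continuous extensions. -/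
def enormOn {A : Type*} [TopologicalSpace A] (X : Set (ℤ → A)) (f : (ℤ → A) → ℝ) : ℝ≥0∞ :=
  ⨅ (g : (ℤ → A) → ℝ) (_ : Continuous g) (_ : ∀ x ∈ X, g x = f x), enormFull g

/-- `f` has bounded total oscillations on `X` (i.e. `f ∈ B(X)`). -/
def BTO {A : Type*} [TopologicalSpace A] (X : Set (ℤ → A)) (f : (ℤ → A) → ℝ) : Prop :=
  ContinuousOn f X ∧ enormOn X f ≠ ⊤

/-- The real value of `‖f‖_δ`. -/
def dnorm {A : Type*} [TopologicalSpace A] (X : Set (ℤ → A)) (f : (ℤ → A) → ℝ) : ℝ :=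
  (enormOn X f).toReal

/-- The pressure `p(φ)`. -/
def pressure (α β : ℝ) (b : ℕ → ℕ) (φ : (ℤ → ℕ) → ℝ) : ℝ :=
  limUnder atTop fun n : ℕ =>
    Real.log (∑' x : (En α β b n), Real.exp (birkhoff φ n x.1)) / (2 * n + 1)

/-- `ν` is a tangent functional to the pressure at `φ` (an equilibrium measure for `φ`). -/
def IsTangent (α β : ℝ) (b : ℕ → ℕ) (φ : (ℤ → ℕ) → ℝ) (ν : Measure (ℤ → ℕ)) : Prop :=
  ∀ f : (ℤ → ℕ) → ℝ, ContinuousOn f (SigmaAB α β) →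
    pressure α β b φ + ∫ x, f x ∂ν ≤ pressure α β b (fun x => φ x + f x)

/-- The cylinder `[x_1 … x_m]` in `Σ^{α,β}`. -/
def cyl (α β : ℝ) (x : ℤ → ℕ) (m : ℕ) : Set (ℤ → ℕ) :=
  {y ∈ SigmaAB α β | ∀ i : ℕ, 1 ≤ i → i ≤ m → y (i : ℤ) = x (i : ℤ)}

/-- `ν` is a weak Gibbs measure for `ψ` on `Σ^{α,β}`. -/
def WeakGibbs (α β : ℝ) (ν : Measure (ℤ → ℕ)) (ψ : (ℤ → ℕ) → ℝ) : Prop :=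
  ∀ δ : ℝ, 0 < δ → ∃ N : ℕ, ∀ m : ℕ, N ≤ m → ∀ x ∈ SigmaAB α β,
    |Real.log (ν (cyl α β x m)).toReal / m -
      (∑ l ∈ Finset.Icc (1 : ℤ) (m : ℤ), ψ (shiftI l x)) / m| ≤ δ


/-- Concatenation `w·x` of a word and a one-sided sequence. -/
def wordApp (w : List ℕ) (x : ℕ → ℕ) : ℕ → ℕ :=
  fun n => if n < w.length then w.getD n 1 else x (n - w.length)

/-- `σ^k` on one-sided sequences. -/
def shiftN (k : ℕ) (s : ℕ → ℕ) : ℕ → ℕ := fun n => s (k + n)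

end AB

/-!
`T^{|w|}` maps the points of `[0,1)` whose expansion begins with `w ∈ L^{α,β}` onto the interval
`[T^{k₁(w)} 0, ℓ_{k₂(w)})`, where `ℓ` is the orbit of `1` under the left-continuous version of `T`.
This goes by induction on `w`: on each digit branch `T` is affine, and appending a digit either
extends the border `k₁` (resp. `k₂`) by one or resets it to `0`, because `a` is lexicographically
below all of its shifts and `b` above all of its shifts. Hence `F(w)` is the closure of the
expansions of the points of this interval. Expansions are lexicographically monotone, the left
endpoint has expansion `σ^{k₁}a`, and expansions of points just left of `ℓ_{k₂}` converge to
`σ^{k₂}b`; this identifies the closure with `{x ∈ X^{α,β} : σ^{k₁}a ⪯ x ⪯ σ^{k₂}b}`.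
-/

namespace AB

open PiNat (cylinder)

theorem seqLe_iff_toLex_le {x y : ℕ → ℕ} : seqLe x y ↔ toLex x ≤ toLex y := by
  rw [le_iff_eq_or_lt, toLex_inj]
  rfl

section Lex

variable {E : Type*} [LinearOrder E]

theorem toLex_lt_of_eqOn_of_lt {x y : ℕ → E} {m : ℕ} (h : ∀ i < m, x i = y i)
    (hm : x m < y m) : toLex x < toLex y :=
  ⟨m, h, hm⟩

theorem mem_cylinder_of_toLex_le_of_le {u v w : ℕ → E} {n : ℕ} (huv : toLex u ≤ toLex v)
    (hvw : toLex v ≤ toLex w) (hw : w ∈ cylinder u n) : v ∈ cylinder u n := by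
  intro i hi
  induction i using Nat.strong_induction_on with
  | _ i ih =>
    have hbelow : ∀ j < i, v j = u j := fun j hj => ih j hj (hj.trans hi)
    rcases lt_trichotomy (v i) (u i) with h | h | h
    · exact absurd huv (not_le.2 (toLex_lt_of_eqOn_of_lt hbelow h))
    · exact h
    · refine absurd hvw (not_le.2 (toLex_lt_of_eqOn_of_lt (fun j hj => ?_) (hw i hi ▸ h)))
      rw [hw j (hj.trans hi), hbelow j hj]

theorem exists_cylinder_toLex_lt {x y : ℕ → E} (h : toLex x < toLex y) :
    ∃ n, ∀ x' ∈ cylinder x n, ∀ y' ∈ cylinder y n, toLex x' < toLex y' := by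
  obtain ⟨m, hlt, hm⟩ := h
  have hx : ∀ i < m, x i = y i := hlt
  refine ⟨m + 1, fun x' hx' y' hy' => toLex_lt_of_eqOn_of_lt (m := m)
    (fun i hi => ?_) ?_⟩
  · rw [hx' i (by omega), hy' i (by omega), hx i hi]
  · rwa [hx' m (by omega), hy' m (by omega)]

variable [TopologicalSpace E] [DiscreteTopology E]

theorem isOpen_setOf_toLex_lt (y : ℕ → E) : IsOpen {x : ℕ → E | toLex y < toLex x} := by
  refine isOpen_iff_mem_nhds.2 fun x hx => ?_
  obtain ⟨n, hn⟩ := exists_cylinder_toLex_lt hx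
  exact Filter.mem_of_superset ((PiNat.isOpen_cylinder _ x n).mem_nhds
    (PiNat.self_mem_cylinder x n)) fun z hz => hn y (PiNat.self_mem_cylinder y n) z hz

theorem isOpen_setOf_lt_toLex (y : ℕ → E) : IsOpen {x : ℕ → E | toLex x < toLex y} := by
  refine isOpen_iff_mem_nhds.2 fun x hx => ?_
  obtain ⟨n, hn⟩ := exists_cylinder_toLex_lt hx
  exact Filter.mem_of_superset ((PiNat.isOpen_cylinder _ x n).mem_nhds
    (PiNat.self_mem_cylinder x n)) fun z hz => hn z hz y (PiNat.self_mem_cylinder y n)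

theorem isClosed_setOf_toLex_le (y : ℕ → E) : IsClosed {x : ℕ → E | toLex x ≤ toLex y} := by
  convert (isOpen_setOf_toLex_lt y).isClosed_compl using 1
  exact Set.ext fun _ => Iff.symm (not_lt (α := Lex (ℕ → E)))

theorem isClosed_setOf_le_toLex (y : ℕ → E) : IsClosed {x : ℕ → E | toLex y ≤ toLex x} := by
  convert (isOpen_setOf_lt_toLex y).isClosed_compl using 1
  exact Set.ext fun _ => Iff.symm (not_lt (α := Lex (ℕ → E)))

theorem le_toLex_of_mem_closure {s : Set (ℕ → E)} {x y : ℕ → E} (hx : x ∈ closure s)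
    (h : ∀ z ∈ s, toLex y ≤ toLex z) : toLex y ≤ toLex x :=
  closure_minimal h (isClosed_setOf_le_toLex y) hx

theorem toLex_le_of_mem_closure {s : Set (ℕ → E)} {x y : ℕ → E} (hx : x ∈ closure s)
    (h : ∀ z ∈ s, toLex z ≤ toLex y) : toLex x ≤ toLex y :=
  closure_minimal h (isClosed_setOf_toLex_le y) hx

omit [LinearOrder E] in
theorem mem_closure_iff_cylinder {s : Set (ℕ → E)} {x : ℕ → E} :
    x ∈ closure s ↔ ∀ n, (s ∩ cylinder x n).Nonempty := by
  rw [(PiNat.isTopologicalBasis_cylinders fun _ => E).mem_closure_iff]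
  constructor
  · exact fun h n => Set.inter_comm s _ ▸ h _ ⟨x, n, rfl⟩ (PiNat.self_mem_cylinder x n)
  · rintro h _ ⟨y, n, rfl⟩ hx
    rw [← PiNat.mem_cylinder_iff_eq.1 hx, Set.inter_comm]
    exact h n

end Lex

section Transformation

variable {α β x y : ℝ}

theorem T_mem_Ico (α β x : ℝ) : T α β x ∈ Set.Ico (0 : ℝ) 1 :=
  ⟨Int.fract_nonneg (β * x + α), Int.fract_lt_one (β * x + α)⟩

theorem iterate_T_mem_Ico (hx : x ∈ Set.Ico (0 : ℝ) 1) (n : ℕ) :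
    (T α β)^[n] x ∈ Set.Ico (0 : ℝ) 1 := by
  cases n with
  | zero => exact hx
  | succ n => rw [Function.iterate_succ_apply']; exact T_mem_Ico α β _

theorem iterate_T_nonneg (hx : 0 ≤ x) (n : ℕ) : 0 ≤ (T α β)^[n] x := by
  cases n with
  | zero => exact hx
  | succ n => rw [Function.iterate_succ_apply']; exact (T_mem_Ico α β _).1

theorem digit_cast (hα : 0 ≤ α) (hβ : 0 < β) (hx : 0 ≤ x) :
    (digit α β x : ℝ) = ⌊β * x + α⌋ := by
  have : 0 ≤ ⌊β * x + α⌋ := Int.floor_nonneg.2 (by positivity)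
  rw [digit, ← Int.cast_natCast, Int.toNat_of_nonneg this]

theorem T_eq (hα : 0 ≤ α) (hβ : 0 < β) (hx : 0 ≤ x) :
    T α β x = β * x + α - digit α β x := by
  rw [T, digit_cast hα hβ hx]

theorem digit_eq_iff (hα : 0 ≤ α) (hβ : 0 < β) (hx : 0 ≤ x) {c : ℕ} :
    digit α β x = c ↔ (c : ℝ) ≤ β * x + α ∧ β * x + α < c + 1 := by
  rw [← Nat.cast_inj (R := ℝ), digit_cast hα hβ hx, ← Int.cast_natCast, Int.cast_inj,
    Int.floor_eq_iff]

theorem digit_mono (hβ : 0 ≤ β) (hxy : x ≤ y) :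
    digit α β x ≤ digit α β y :=
  Int.toNat_le_toNat (Int.floor_le_floor (by nlinarith))

theorem digit_le_lamNat (hβ : 0 < β) (hx : x ∈ Set.Ico (0 : ℝ) 1) :
    digit α β x ≤ lamNat α β := by
  have hlt : β * x + α < α + β := by nlinarith [hx.2]
  have : ⌊β * x + α⌋ < ⌈α + β⌉ :=
    Int.cast_lt.1 ((Int.floor_le _).trans_lt (hlt.trans_le (Int.le_ceil _)))
  exact Int.toNat_le_toNat (by omega)

theorem iSeq_add (α β x : ℝ) (j i : ℕ) :
    iSeq α β x (j + i) = iSeq α β ((T α β)^[j] x) i := by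
  rw [iSeq, iSeq, add_comm, Function.iterate_add_apply]

theorem iSeq_iterate (α β x : ℝ) (j : ℕ) :
    iSeq α β ((T α β)^[j] x) = shiftN j (iSeq α β x) :=
  funext fun i => (iSeq_add α β x j i).symm

theorem iterate_T_sub_iterate_T (hα : 0 ≤ α) (hβ : 0 < β) (hx : 0 ≤ x) (hy : 0 ≤ y) {m : ℕ}
    (hag : ∀ i < m, iSeq α β x i = iSeq α β y i) :
    (T α β)^[m] y - (T α β)^[m] x = β ^ m * (y - x) := by
  induction m with
  | zero => simp
  | succ m ih =>
    have hd : (digit α β ((T α β)^[m] x) : ℝ) = digit α β ((T α β)^[m] y) :=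
      congrArg Nat.cast (hag m m.lt_succ_self)
    rw [Function.iterate_succ_apply', Function.iterate_succ_apply',
      T_eq hα hβ (iterate_T_nonneg hx m), T_eq hα hβ (iterate_T_nonneg hy m), hd, pow_succ,
      mul_comm _ β, mul_assoc, ← ih fun i hi => hag i (hi.trans m.lt_succ_self)]
    ring

theorem monotoneOn_iSeq (hα : 0 ≤ α) (hβ : 0 < β) :
    MonotoneOn (fun x => toLex (iSeq α β x)) (Set.Ici 0) := by
  intro x hx y hy hxy
  refine not_lt.1 fun ⟨m, hag, hlt⟩ => ?_
  have hdiff := iterate_T_sub_iterate_T hα hβ hy hx hag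
  have hTm : (T α β)^[m] y < (T α β)^[m] x := by
    by_contra h
    exact hlt.not_ge (digit_mono hβ.le (not_lt.1 h))
  nlinarith [pow_pos hβ m]

end Transformation

section LeftOrbit

/-- The orbit of `1` under the left-continuous version `x ↦ βx + α − ⌈βx + α⌉ + 1` of `T`. -/
def ell (α β : ℝ) : ℕ → ℝ
  | 0 => 1
  | j + 1 => β * ell α β j + α - (⌈β * ell α β j + α⌉ - 1)

/-- The digits along `ell`, i.e. the expansion of `1` read from the left. -/
def bbSeq (α β : ℝ) : ℕ → ℕ := fun j => (⌈β * ell α β j + α⌉ - 1).toNat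

variable {α β : ℝ}

theorem ell_mem_Ioc (α β : ℝ) (j : ℕ) : ell α β j ∈ Set.Ioc 0 1 := by
  cases j with
  | zero => exact ⟨one_pos, le_rfl⟩
  | succ j =>
    have h1 := Int.ceil_lt_add_one (β * ell α β j + α)
    have h2 := Int.le_ceil (β * ell α β j + α)
    constructor <;> simp only [ell] <;> linarith

theorem bbSeq_cast (hα : 0 ≤ α) (hβ : 0 < β) (j : ℕ) :
    (bbSeq α β j : ℝ) = ⌈β * ell α β j + α⌉ - 1 := by
  have : 0 < β * ell α β j + α := by nlinarith [(ell_mem_Ioc α β j).1]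
  have : 1 ≤ ⌈β * ell α β j + α⌉ := Int.one_le_ceil_iff.2 this
  rw [bbSeq, ← Int.cast_natCast, Int.toNat_of_nonneg (by omega)]
  push_cast
  rfl

theorem bbSeq_lt (hα : 0 ≤ α) (hβ : 0 < β) (j : ℕ) :
    (bbSeq α β j : ℝ) < β * ell α β j + α := by
  linarith [bbSeq_cast hα hβ j, Int.ceil_lt_add_one (β * ell α β j + α)]

theorem le_bbSeq_add_one (hα : 0 ≤ α) (hβ : 0 < β) (j : ℕ) :
    β * ell α β j + α ≤ bbSeq α β j + 1 := by
  linarith [bbSeq_cast hα hβ j, Int.le_ceil (β * ell α β j + α)]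

theorem ell_succ (hα : 0 ≤ α) (hβ : 0 < β) (j : ℕ) :
    ell α β (j + 1) = β * ell α β j + α - bbSeq α β j := by
  rw [bbSeq_cast hα hβ, ell]

theorem eventually_iSeq_eq_bbSeq (hα : 0 ≤ α) (hβ : 0 < β) (M : ℕ) :
    ∀ j, ∀ᶠ t in 𝓝[<] ell α β j, ∀ i < M, iSeq α β t i = bbSeq α β (j + i) := by
  induction M with
  | zero => exact fun j => Eventually.of_forall fun t i hi => absurd hi i.not_lt_zero
  | succ M ih =>
    intro j
    set f : ℝ → ℝ := fun t => β * t + α - bbSeq α β j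
    have hf : Tendsto f (𝓝[<] ell α β j) (𝓝[<] ell α β (j + 1)) := by
      refine tendsto_nhdsWithin_iff.2 ⟨?_, ?_⟩
      · rw [ell_succ hα hβ]
        exact ((continuous_const.mul continuous_id).add continuous_const).sub continuous_const
          |>.tendsto _ |>.mono_left nhdsWithin_le_nhds
      · filter_upwards [self_mem_nhdsWithin] with t (ht : t < ell α β j)
        rw [ell_succ hα hβ]
        show β * t + α - _ < _
        nlinarith
    have hlow : max 0 ((bbSeq α β j - α) / β) < ell α β j := by
      refine max_lt (ell_mem_Ioc α β j).1 ?_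
      rw [div_lt_iff₀ hβ]
      linarith [bbSeq_lt hα hβ j]
    filter_upwards [Ioo_mem_nhdsLT hlow, hf.eventually (ih (j + 1))] with t ht hTt
    have ht0 : 0 ≤ t := (le_max_left _ _).trans ht.1.le
    have hdigit : digit α β t = bbSeq α β j := by
      have := (le_max_right _ _).trans_lt ht.1
      rw [div_lt_iff₀ hβ] at this
      rw [digit_eq_iff hα hβ ht0]
      constructor <;> nlinarith [le_bbSeq_add_one hα hβ j, ht.2]
    rintro (_ | i) hi
    · exact hdigit
    · rw [add_comm i, iSeq_add α β t 1 i, Function.iterate_one, T_eq hα hβ ht0, hdigit,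
        hTt i (by omega), add_assoc, add_comm 1 i]

theorem eq_bbSeq_of_tendsto (hα : 0 ≤ α) (hβ : 0 < β) {b : ℕ → ℕ}
    (hb : Tendsto (iSeq α β) (𝓝[<] 1) (𝓝 b)) : b = bbSeq α β := by
  refine tendsto_nhds_unique hb (tendsto_pi_nhds.2 fun i => ?_)
  rw [nhds_discrete, tendsto_pure]
  filter_upwards [eventually_iSeq_eq_bbSeq hα hβ (i + 1) 0] with t ht
  simpa using ht i i.lt_succ_self

end LeftOrbit

section Order

variable {α β : ℝ}

theorem shiftN_zero (s : ℕ → ℕ) : shiftN 0 s = s :=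
  funext fun n => congrArg s (zero_add n)

theorem shiftN_bbSeq_mem_closure (hα : 0 ≤ α) (hβ : 0 < β) {u : ℝ} {k : ℕ}
    (hu : u < ell α β k) :
    shiftN k (bbSeq α β) ∈ closure (iSeq α β '' Set.Ico u (ell α β k)) := by
  refine mem_closure_iff_cylinder.2 fun N => ?_
  obtain ⟨t, hagree, ht⟩ :=
    ((eventually_iSeq_eq_bbSeq hα hβ N k).and (Ico_mem_nhdsLT hu)).exists
  exact ⟨iSeq α β t, ⟨t, ht, rfl⟩, hagree⟩

theorem iSeq_le_shiftN_bbSeq (hα : 0 ≤ α) (hβ : 0 < β) {t : ℝ} {k : ℕ} (ht0 : 0 ≤ t)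
    (ht : t < ell α β k) : toLex (iSeq α β t) ≤ toLex (shiftN k (bbSeq α β)) :=
  le_toLex_of_mem_closure (shiftN_bbSeq_mem_closure hα hβ ht) <| Set.forall_mem_image.2
    fun _ hs => monotoneOn_iSeq hα hβ ht0 (ht0.trans hs.1) hs.1

theorem shiftN_bbSeq_le_iSeq (hα : 0 ≤ α) (hβ : 0 < β) {y : ℝ} {k : ℕ}
    (hy : ell α β k ≤ y) : toLex (shiftN k (bbSeq α β)) ≤ toLex (iSeq α β y) :=
  toLex_le_of_mem_closure (shiftN_bbSeq_mem_closure hα hβ (ell_mem_Ioc α β k).1) <|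
    Set.forall_mem_image.2 fun _ hs =>
      monotoneOn_iSeq hα hβ hs.1 (hs.1.trans (hs.2.le.trans hy)) (hs.2.le.trans hy)

theorem shiftN_bbSeq_le_bbSeq (hα : 0 ≤ α) (hβ : 0 < β) (d : ℕ) :
    toLex (shiftN d (bbSeq α β)) ≤ toLex (bbSeq α β) :=
  toLex_le_of_mem_closure (shiftN_bbSeq_mem_closure hα hβ (ell_mem_Ioc α β d).1) <|
    Set.forall_mem_image.2 fun _ hs => shiftN_zero (bbSeq α β) ▸
      iSeq_le_shiftN_bbSeq hα hβ hs.1 (hs.2.trans_le (ell_mem_Ioc α β d).2)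

theorem shiftN_aSeq (α β : ℝ) (k : ℕ) :
    shiftN k (aSeq α β) = iSeq α β ((T α β)^[k] 0) :=
  (iSeq_iterate α β 0 k).symm

theorem aSeq_le_shiftN_aSeq (hα : 0 ≤ α) (hβ : 0 < β) (d : ℕ) :
    toLex (aSeq α β) ≤ toLex (shiftN d (aSeq α β)) := by
  have h0 : (0 : ℝ) ∈ Set.Ici 0 := Set.mem_Ici.2 le_rfl
  rw [shiftN_aSeq]
  exact monotoneOn_iSeq hα hβ h0 (iterate_T_nonneg h0 d) (iterate_T_nonneg h0 d)

end Order

section Borders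

variable {s : ℕ → ℕ} {w : List ℕ} {c k : ℕ}

theorem pre_succ (s : ℕ → ℕ) (k : ℕ) : pre s (k + 1) = pre s k ++ [s k] := by
  simp [pre, List.range_succ]

theorem kk_le (s : ℕ → ℕ) (w : List ℕ) : kk s w ≤ w.length := Nat.findGreatest_le _

theorem drop_kk (s : ℕ → ℕ) (w : List ℕ) : w.drop (w.length - kk s w) = pre s (kk s w) :=
  Nat.findGreatest_spec (P := fun k => w.drop (w.length - k) = pre s k) (Nat.zero_le _)
    (by simp [pre])

theorem le_kk (h : w.drop (w.length - k) = pre s k) : k ≤ kk s w := by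
  have hlen := congrArg List.length h
  simp only [List.length_drop, pre, List.length_map, List.length_range] at hlen
  exact Nat.le_findGreatest (by omega) h

theorem drop_append_singleton_eq_pre_succ_iff (hk : k ≤ w.length) :
    (w ++ [c]).drop ((w ++ [c]).length - (k + 1)) = pre s (k + 1) ↔
      w.drop (w.length - k) = pre s k ∧ c = s k := by
  rw [List.length_append, List.length_singleton, Nat.add_sub_add_right,
    List.drop_append_of_le_length (by omega), pre_succ, List.append_singleton_inj]

theorem of_kk_append_eq_succ (h : kk s (w ++ [c]) = k + 1) :
    w.drop (w.length - k) = pre s k ∧ c = s k := by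
  have hk : k ≤ w.length := by simpa [h] using kk_le s (w ++ [c])
  exact (drop_append_singleton_eq_pre_succ_iff hk).1 (h ▸ drop_kk s (w ++ [c]))

theorem kk_append_of_eq (h : c = s (kk s w)) : kk s (w ++ [c]) = kk s w + 1 := by
  refine le_antisymm ?_
    (le_kk ((drop_append_singleton_eq_pre_succ_iff (kk_le s w)).2 ⟨drop_kk s w, h⟩))
  match hk : kk s (w ++ [c]) with
  | 0 => omega
  | k + 1 => exact Nat.succ_le_succ (le_kk (of_kk_append_eq_succ hk).1)

theorem kk_append_eq_zero (h : ∀ k ≤ kk s w, w.drop (w.length - k) = pre s k → c ≠ s k) :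
    kk s (w ++ [c]) = 0 := by
  match hk : kk s (w ++ [c]) with
  | 0 => rfl
  | k + 1 =>
    obtain ⟨hborder, hc⟩ := of_kk_append_eq_succ hk
    exact absurd hc (h k (le_kk hborder) hborder)

theorem shiftN_mem_cylinder_of_drop_eq_pre {K : ℕ} (hkK : k ≤ K) (hKw : K ≤ w.length)
    (hk : w.drop (w.length - k) = pre s k) (hK : w.drop (w.length - K) = pre s K) :
    shiftN (K - k) s ∈ cylinder s k := by
  intro i hi
  have h : (pre s K).drop (K - k) = pre s k := by
    rw [← hK, ← hk, List.drop_drop]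
    congr 1
    omega
  have := congrArg (·[i]?) h
  simpa [pre, shiftN, List.getElem?_range, hi, show K - k + i < K by omega] using this

/-- A shorter border of `w` that is a prefix of `s` would give a shift of `s` below `s`. -/
theorem kk_append_of_gt (hs : ∀ d, toLex s ≤ toLex (shiftN d s)) (hc : s (kk s w) < c) :
    kk s (w ++ [c]) = 0 := by
  refine kk_append_eq_zero fun k hk hborder hck => ?_
  obtain rfl | hlt := hk.eq_or_lt
  · omega
  refine (hs (kk s w - k)).not_gt (toLex_lt_of_eqOn_of_lt
    (shiftN_mem_cylinder_of_drop_eq_pre hlt.le (kk_le s w) hborder (drop_kk s w)) ?_)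
  rw [shiftN, Nat.sub_add_cancel hlt.le]
  omega

theorem kk_append_of_lt (hs : ∀ d, toLex (shiftN d s) ≤ toLex s) (hc : c < s (kk s w)) :
    kk s (w ++ [c]) = 0 := by
  refine kk_append_eq_zero fun k hk hborder hck => ?_
  obtain rfl | hlt := hk.eq_or_lt
  · omega
  refine (hs (kk s w - k)).not_gt (toLex_lt_of_eqOn_of_lt (fun i hi =>
    (shiftN_mem_cylinder_of_drop_eq_pre hlt.le (kk_le s w) hborder (drop_kk s w) i hi).symm) ?_)
  rw [shiftN, Nat.sub_add_cancel hlt.le]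
  omega

end Borders

section Cylinder

variable {α β : ℝ}

def cylinderSet (α β : ℝ) (w : List ℕ) : Set ℝ :=
  {x | x ∈ Set.Ico 0 1 ∧ pre (iSeq α β x) w.length = w}

theorem cylinderSet_nil : cylinderSet α β [] = Set.Ico 0 1 := by
  ext x
  simp [cylinderSet, pre]

theorem cylinderSet_append (w : List ℕ) (c : ℕ) :
    cylinderSet α β (w ++ [c]) =
      cylinderSet α β w ∩ (T α β)^[w.length] ⁻¹' {x | digit α β x = c} := by
  ext x
  simp only [cylinderSet, List.length_append, List.length_singleton, pre_succ,
    List.append_singleton_inj, Set.mem_inter_iff, Set.mem_preimage, Set.mem_ofPred_eq, and_assoc]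
  rfl

/-- On the digit-`c` branch `T` is the affine map `x ↦ βx + α − c`, whose range there is
`[0,1)`. -/
theorem T_image_Ico_inter_digit (hα : 0 ≤ α) (hβ : 0 < β) {L : ℝ} (hL : 0 ≤ L) (R : ℝ) (c : ℕ) :
    T α β '' (Set.Ico L R ∩ {x | digit α β x = c}) =
      Set.Ico (max (β * L + α - c) 0) (min (β * R + α - c) 1) := by
  have hbranch : Set.Ico L R ∩ {x | digit α β x = c} =
      Set.Ico L R ∩ (β * · + (α - c)) ⁻¹' Set.Ico 0 1 := by
    ext x
    simp only [Set.mem_inter_iff, Set.mem_ofPred_eq, Set.mem_preimage, Set.mem_Ico]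
    refine and_congr_right fun hx => ?_
    rw [digit_eq_iff hα hβ (hL.trans hx.1)]
    constructor <;> rintro ⟨h1, h2⟩ <;> constructor <;> linarith
  have hT : Set.EqOn (T α β) (β * · + (α - c)) (Set.Ico L R ∩ {x | digit α β x = c}) :=
    fun x hx => by rw [T_eq hα hβ (hL.trans hx.1.1), hx.2]; ring
  rw [hT.image_eq, hbranch, Set.image_inter_preimage, Set.image_affine_Ico hβ, Set.Ico_inter_Ico]
  simp only [add_sub_assoc]

theorem max_eq_iterate_kk_append (hα : 0 ≤ α) (hβ : 0 < β) {w : List ℕ} {c : ℕ}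
    (hc : aSeq α β (kk (aSeq α β) w) ≤ c) :
    max (β * (T α β)^[kk (aSeq α β) w] 0 + α - c) 0 = (T α β)^[kk (aSeq α β) (w ++ [c])] 0 := by
  set K := kk (aSeq α β) w
  have hL0 : 0 ≤ (T α β)^[K] 0 := iterate_T_nonneg le_rfl K
  have hdigit : digit α β ((T α β)^[K] 0) = aSeq α β K := rfl
  rcases hc.eq_or_lt with h | h
  · have hT := (T_mem_Ico α β ((T α β)^[K] 0)).1
    rw [T_eq hα hβ hL0, hdigit, h] at hT
    rw [kk_append_of_eq h.symm, Function.iterate_succ_apply', T_eq hα hβ hL0, hdigit, h]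
    exact max_eq_left hT
  · rw [kk_append_of_gt (aSeq_le_shiftN_aSeq hα hβ) h, Function.iterate_zero_apply]
    have := ((digit_eq_iff hα hβ hL0).1 hdigit).2
    have : (aSeq α β K : ℝ) + 1 ≤ c := by exact_mod_cast h
    exact max_eq_right (by linarith)

theorem min_eq_ell_kk_append (hα : 0 ≤ α) (hβ : 0 < β) {w : List ℕ} {c : ℕ}
    (hc : c ≤ bbSeq α β (kk (bbSeq α β) w)) :
    min (β * ell α β (kk (bbSeq α β) w) + α - c) 1 = ell α β (kk (bbSeq α β) (w ++ [c])) := by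
  set K := kk (bbSeq α β) w
  rcases hc.eq_or_lt with h | h
  · have hell := (ell_mem_Ioc α β (K + 1)).2
    rw [ell_succ hα hβ, ← h] at hell
    rw [kk_append_of_eq h, ell_succ hα hβ, ← h]
    exact min_eq_left hell
  · rw [kk_append_of_lt (shiftN_bbSeq_le_bbSeq hα hβ) h]
    have := bbSeq_lt hα hβ K
    have : (c : ℝ) + 1 ≤ bbSeq α β K := by exact_mod_cast h
    exact min_eq_right (by linarith)

theorem image_cylinderSet (hα : 0 ≤ α) (hβ : 0 < β) (w : List ℕ)
    (hne : (cylinderSet α β w).Nonempty) :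
    (T α β)^[w.length] '' cylinderSet α β w =
      Set.Ico ((T α β)^[kk (aSeq α β) w] 0) (ell α β (kk (bbSeq α β) w)) := by
  induction w using List.reverseRecOn with
  | nil => simp [cylinderSet_nil, kk, ell]
  | append_singleton w c ih =>
    set L := (T α β)^[kk (aSeq α β) w] 0
    set R := ell α β (kk (bbSeq α β) w)
    have himage : (T α β)^[(w ++ [c]).length] '' cylinderSet α β (w ++ [c]) =
        Set.Ico (max (β * L + α - c) 0) (min (β * R + α - c) 1) := by
      rw [List.length_append, List.length_singleton, Function.iterate_succ', Set.image_comp,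
        cylinderSet_append, Set.image_inter_preimage,
        ih (hne.mono (cylinderSet_append w c ▸ Set.inter_subset_left)),
        T_image_Ico_inter_digit hα hβ (iterate_T_nonneg le_rfl _)]
    have hlt := Set.nonempty_Ico.1 (himage ▸ hne.image _)
    have hLc : aSeq α β (kk (aSeq α β) w) ≤ c := by
      have hdigit : digit α β L = aSeq α β (kk (aSeq α β) w) := rfl
      have := ((digit_eq_iff hα hβ (iterate_T_nonneg le_rfl _)).1 hdigit).1
      have : (aSeq α β (kk (aSeq α β) w) : ℝ) < c + 1 := by
        linarith [(le_max_left _ _).trans_lt (hlt.trans_le (min_le_right _ _))]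
      exact Nat.lt_succ_iff.1 (by exact_mod_cast this)
    have hcR : c ≤ bbSeq α β (kk (bbSeq α β) w) := by
      have := le_bbSeq_add_one hα hβ (kk (bbSeq α β) w)
      have : (c : ℝ) < bbSeq α β (kk (bbSeq α β) w) + 1 := by
        linarith [(le_max_right _ _).trans_lt (hlt.trans_le (min_le_left _ _))]
      exact Nat.lt_succ_iff.1 (by exact_mod_cast this)
    rw [himage, max_eq_iterate_kk_append hα hβ hLc, min_eq_ell_kk_append hα hβ hcR]

end Cylinder

section FollowerSet

variable {α β : ℝ}

theorem Xab_eq_closure (α β : ℝ) : Xab α β = closure (iSeq α β '' Set.Ico 0 1) := by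
  simp only [Xab, Set.image, eq_comm]

theorem le_lamNat_of_mem_Xab (hβ : 0 < β) {s : ℕ → ℕ} (hs : s ∈ Xab α β) (i : ℕ) :
    s i ≤ lamNat α β := by
  have hsub : iSeq α β '' Set.Ico 0 1 ⊆ (fun s : ℕ → ℕ => s i) ⁻¹' Set.Iic (lamNat α β) :=
    Set.image_subset_iff.2 fun _ hx => digit_le_lamNat hβ (iterate_T_mem_Ico hx i)
  exact closure_minimal hsub ((isClosed_discrete _).preimage (continuous_apply i))
    (Xab_eq_closure α β ▸ hs)

theorem cylinderSet_nonempty_of_mem_Lang {w : List ℕ} (hw : w ∈ Lang α β) :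
    (cylinderSet α β w).Nonempty := by
  obtain ⟨s, hs, k, hws⟩ := hw
  rw [Xab_eq_closure, mem_closure_iff_cylinder] at hs
  obtain ⟨_, ⟨y, hy, rfl⟩, hys⟩ := hs (k + w.length)
  refine ⟨(T α β)^[k] y, iterate_T_mem_Ico hy k, ?_⟩
  conv_rhs => rw [hws]
  exact List.map_congr_left fun i hi => by
    rw [iSeq_iterate, shiftN, hys (k + i) (by simp at hi; omega)]

theorem mem_cylinder_wordApp_iff {w : List ℕ} {x y : ℕ → ℕ} {N : ℕ} :
    y ∈ cylinder (wordApp w x) (w.length + N) ↔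
      pre y w.length = w ∧ shiftN w.length y ∈ cylinder x N := by
  simp only [PiNat.mem_cylinder_iff]
  constructor
  · intro h
    refine ⟨List.ext_getElem (by simp [pre]) fun i h1 h2 => ?_, fun i hi => ?_⟩
    · simp only [pre, List.length_map, List.length_range] at h1
      simp [pre, h i (by omega), wordApp, h1]
    · simpa [shiftN, wordApp] using h (w.length + i) (by omega)
  · rintro ⟨hpre, hshift⟩ i hi
    unfold wordApp
    split_ifs with hiw
    · have := congrArg (·[i]?) hpre
      simpa [pre, hiw, List.getD_eq_getElem _ _ hiw] using this
    · simpa [shiftN, Nat.add_sub_cancel' (not_lt.1 hiw)] using hshift (i - w.length) (by omega)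

theorem wordApp_mem_Xab_iff {w : List ℕ} {x : ℕ → ℕ} :
    wordApp w x ∈ Xab α β ↔
      x ∈ closure (iSeq α β '' ((T α β)^[w.length] '' cylinderSet α β w)) := by
  rw [Xab_eq_closure, mem_closure_iff_cylinder, mem_closure_iff_cylinder]
  constructor
  · intro h N
    obtain ⟨_, ⟨z, hz, rfl⟩, hzx⟩ := h (w.length + N)
    obtain ⟨hpre, hshift⟩ := mem_cylinder_wordApp_iff.1 hzx
    exact ⟨_, ⟨_, ⟨z, ⟨hz, hpre⟩, rfl⟩, rfl⟩, by rwa [iSeq_iterate]⟩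
  · intro h N
    obtain ⟨_, ⟨_, ⟨z, hz, rfl⟩, rfl⟩, hzx⟩ := h N
    rw [iSeq_iterate] at hzx
    exact ⟨_, ⟨z, hz.1, rfl⟩, PiNat.cylinder_anti _ (N.le_add_left _)
      (mem_cylinder_wordApp_iff.2 ⟨hz.2, hzx⟩)⟩

theorem closure_iSeq_image_Ico (hα : 0 ≤ α) (hβ : 0 < β) {L : ℝ} {k : ℕ} (hL : 0 ≤ L)
    (hLR : L < ell α β k) :
    closure (iSeq α β '' Set.Ico L (ell α β k)) =
      {x | x ∈ Xab α β ∧ toLex (iSeq α β L) ≤ toLex x ∧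
        toLex x ≤ toLex (shiftN k (bbSeq α β))} := by
  refine (closure_minimal ?_ ?_).antisymm fun x ⟨hx, hLx, hxR⟩ => ?_
  · rintro _ ⟨t, ht, rfl⟩
    have ht0 : 0 ≤ t := hL.trans ht.1
    have ht1 : t < 1 := ht.2.trans_le (ell_mem_Ioc α β k).2
    exact ⟨Xab_eq_closure α β ▸ subset_closure ⟨t, ⟨ht0, ht1⟩, rfl⟩,
      monotoneOn_iSeq hα hβ hL ht0 ht.1, iSeq_le_shiftN_bbSeq hα hβ ht0 ht.2⟩
  · exact (Xab_eq_closure α β ▸ isClosed_closure).inter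
      ((isClosed_setOf_le_toLex _).inter (isClosed_setOf_toLex_le _))
  rw [Xab_eq_closure, mem_closure_iff_cylinder] at hx
  refine mem_closure_iff_cylinder.2 fun N => ?_
  obtain ⟨_, ⟨y, hy, rfl⟩, hyx⟩ := hx N
  have hcyl := PiNat.mem_cylinder_iff_eq.1 hyx
  rcases lt_or_ge y L with hyL | hLy
  · have hLy : iSeq α β L ∈ cylinder (iSeq α β y) N :=
      mem_cylinder_of_toLex_le_of_le (monotoneOn_iSeq hα hβ hy.1 hL hyL.le) hLx
        ((PiNat.mem_cylinder_comm _ _ _).1 hyx)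
    exact ⟨_, ⟨L, ⟨le_rfl, hLR⟩, rfl⟩, hcyl ▸ hLy⟩
  rcases lt_or_ge y (ell α β k) with hyR | hRy
  · exact ⟨_, ⟨y, ⟨hLy, hyR⟩, rfl⟩, hyx⟩
  have hshift : shiftN k (bbSeq α β) ∈ cylinder x N :=
    mem_cylinder_of_toLex_le_of_le hxR (shiftN_bbSeq_le_iSeq hα hβ hRy) hyx
  rw [← PiNat.mem_cylinder_iff_eq.1 hshift]
  exact mem_closure_iff_cylinder.1 (shiftN_bbSeq_mem_closure hα hβ hLR) N

end FollowerSet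

theorem stmt1_general (α β : ℝ) (hα0 : 0 ≤ α) (hβ : 1 < β)
    (b : ℕ → ℕ) (hb : Tendsto (iSeq α β) (𝓝[<] (1 : ℝ)) (𝓝 b))
    (w : List ℕ) (hw : w ∈ Lang α β) :
    {x : ℕ → ℕ | (∀ n : ℕ, x n ≤ lamNat α β) ∧ wordApp w x ∈ Xab α β} =
      {x : ℕ → ℕ | x ∈ Xab α β ∧
        seqLe (shiftN (kk (aSeq α β) w) (aSeq α β)) x ∧
        seqLe x (shiftN (kk b w) b)} := by
  have hβ0 : 0 < β := zero_lt_one.trans hβ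
  obtain rfl := eq_bbSeq_of_tendsto hα0 hβ0 hb
  obtain ⟨z, hz⟩ := cylinderSet_nonempty_of_mem_Lang hw
  have himage := image_cylinderSet hα0 hβ0 w ⟨z, hz⟩
  have hmem := Set.mem_image_of_mem (T α β)^[w.length] hz
  rw [himage] at hmem
  ext x
  rw [Set.mem_ofPred_eq, Set.mem_ofPred_eq, seqLe_iff_toLex_le, seqLe_iff_toLex_le,
    shiftN_aSeq, wordApp_mem_Xab_iff, himage,
    closure_iSeq_image_Ico hα0 hβ0 (iterate_T_nonneg le_rfl _) (hmem.1.trans_lt hmem.2)]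
  exact ⟨fun h => h.2, fun h => ⟨le_lamNat_of_mem_Xab hβ0 h.1, h⟩⟩

/-- description of the follower set `F(w)`. -/
theorem stmt1 (α β : ℝ) (hα0 : 0 ≤ α) (hα1 : α < 1) (hβ : 1 < β)
    (b : ℕ → ℕ) (hb : Tendsto (iSeq α β) (𝓝[<] (1 : ℝ)) (𝓝 b))
    (w : List ℕ) (hw : w ∈ Lang α β) :
    {x : ℕ → ℕ | (∀ n : ℕ, x n ≤ lamNat α β) ∧ wordApp w x ∈ Xab α β} =
      {x : ℕ → ℕ | x ∈ Xab α β ∧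
        seqLe (shiftN (kk (aSeq α β) w) (aSeq α β)) x ∧
        seqLe x (shiftN (kk b w) b)} :=
  stmt1_general α β hα0 hβ b hb w hw

end AB
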